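/- arXiv:2310.12908 — 3 statements merged into one kernel-verified Lean document; each statement's English description precedes it below -/
import Mathlib

section
/- For any α with 0 ≤ α < 1 and any real numbers u, v ≥ 0 with u² + v² ≤ 1, one has (u + 2√(1−α²)·v)/(2−α²) ≤ 2/√3, and this bound is sharp: the supremum over all such u, v, α equals 2/√3. -/
lemma sqrt3_pos : (0:ℝ) < Real.sqrt 3 := Real.sqrt_pos.mpr (by norm_num)

lemma bound_aux (α u v : ℝ) (hα : 0 ≤ α) (hα1 : α < 1) (hu : 0 ≤ u) (hv : 0 ≤ v)
    (huv : u ^ 2 + v ^ 2 ≤ 1) :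
    (u + 2 * Real.sqrt (1 - α ^ 2) * v) / (2 - α ^ 2) ≤ 2 / Real.sqrt 3 := by
  have hα2 : α ^ 2 < 1 := by nlinarith
  have hden : (0:ℝ) < 2 - α ^ 2 := by nlinarith
  set s := Real.sqrt (1 - α ^ 2) with hs
  have hs0 : 0 ≤ s := Real.sqrt_nonneg _
  have hs2 : s ^ 2 = 1 - α ^ 2 := Real.sq_sqrt (by nlinarith)
  set t := Real.sqrt 3 with ht
  have ht0 : (0:ℝ) < t := sqrt3_pos
  have ht2 : t ^ 2 = 3 := Real.sq_sqrt (by norm_num)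
  rw [div_le_div_iff₀ hden ht0]
  nlinarith [sq_nonneg (3 * u - t), sq_nonneg (3 * v - 2 * t * s), sq_nonneg (u - v)]

theorem stmt0 :
    (∀ (α u v : ℝ), 0 ≤ α → α < 1 → 0 ≤ u → 0 ≤ v → u ^ 2 + v ^ 2 ≤ 1 →
      (u + 2 * Real.sqrt (1 - α ^ 2) * v) / (2 - α ^ 2) ≤ 2 / Real.sqrt 3) ∧
    sSup {x : ℝ | ∃ α u v : ℝ, 0 ≤ α ∧ α < 1 ∧ 0 ≤ u ∧ 0 ≤ v ∧ u ^ 2 + v ^ 2 ≤ 1 ∧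
      x = (u + 2 * Real.sqrt (1 - α ^ 2) * v) / (2 - α ^ 2)} = 2 / Real.sqrt 3 := by
  constructor
  · exact bound_aux
  · have hmem : (2 / Real.sqrt 3) ∈ {x : ℝ | ∃ α u v : ℝ, 0 ≤ α ∧ α < 1 ∧ 0 ≤ u ∧ 0 ≤ v ∧
        u ^ 2 + v ^ 2 ≤ 1 ∧ x = (u + 2 * Real.sqrt (1 - α ^ 2) * v) / (2 - α ^ 2)} := by
      refine ⟨Real.sqrt (1/2), Real.sqrt (1/3), Real.sqrt (2/3),
        Real.sqrt_nonneg _, ?_, Real.sqrt_nonneg _, Real.sqrt_nonneg _, ?_, ?_⟩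
      · rw [show (1:ℝ) = Real.sqrt 1 from (Real.sqrt_one).symm]
        exact Real.sqrt_lt_sqrt (by norm_num) (by norm_num)
      · rw [Real.sq_sqrt (by norm_num : (0:ℝ) ≤ 1/3), Real.sq_sqrt (by norm_num : (0:ℝ) ≤ 2/3)]
        norm_num
      · rw [Real.sq_sqrt (by norm_num : (0:ℝ) ≤ 1/2)]
        have h1 : Real.sqrt (1 - 1/2) = Real.sqrt (1/2) := by norm_num
        have h2 : Real.sqrt (1/2) * Real.sqrt (2/3) = Real.sqrt (1/3) := by
          rw [← Real.sqrt_mul (by norm_num)]; norm_num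
        have h3 : Real.sqrt (1/3) = 1 / Real.sqrt 3 := by
          rw [show (1:ℝ)/3 = 3⁻¹ by norm_num, Real.sqrt_inv, one_div]
        rw [h1]
        rw [show 2 * Real.sqrt (1/2) * Real.sqrt (2/3) = 2 * (Real.sqrt (1/2) * Real.sqrt (2/3)) by ring,
          h2, h3]
        have := sqrt3_pos
        field_simp
        ring
    refine le_antisymm ?_ ?_
    · apply csSup_le ⟨_, hmem⟩
      rintro x ⟨α, u, v, h1, h2, h3, h4, h5, rfl⟩
      exact bound_aux α u v h1 h2 h3 h4 h5
    · apply le_csSup ⟨2 / Real.sqrt 3, ?_⟩ hmem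
      rintro x ⟨α, u, v, h1, h2, h3, h4, h5, rfl⟩
      exact bound_aux α u v h1 h2 h3 h4 h5
end

section
/- Every function F ∈ F_ND, defined on B₂ by F(z₁, z₂) = (z₁² + 2√(1−a²) z₂)/(2−a²) for a ∈ [0,1), maps the open unit Euclidean ball B₂ ⊂ ℂ² into the closed unit disc; moreover if a > 0 it maps B₂ into the open unit disc 𝔻. -/
/-! With c = √(1 - a²) the denominator is 2 - a² = 1 + c². By the triangle inequality and
2c|z₂| ≤ c² + |z₂|², the numerator satisfies |z₁² + 2c z₂| ≤ |z₁|² + |z₂|² + c² < 1 + c²,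
so the quotient lies in the open disc for every a ∈ [0, 1). -/

theorem EuclideanSpace.norm_sq_fin_two {𝕜 : Type*} [RCLike 𝕜] (z : EuclideanSpace 𝕜 (Fin 2)) :
    ‖z‖ ^ 2 = ‖z 0‖ ^ 2 + ‖z 1‖ ^ 2 := by
  rw [EuclideanSpace.norm_sq_eq, Fin.sum_univ_two]

theorem norm_sq_add_two_mul_lt {x y : ℂ} {c : ℝ} (hc : 0 ≤ c) (hxy : ‖x‖ ^ 2 + ‖y‖ ^ 2 < 1) :
    ‖x ^ 2 + 2 * (c : ℂ) * y‖ < 1 + c ^ 2 :=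
  calc ‖x ^ 2 + 2 * (c : ℂ) * y‖
      ≤ ‖x ^ 2‖ + ‖2 * (c : ℂ) * y‖ := norm_add_le _ _
    _ = ‖x‖ ^ 2 + 2 * c * ‖y‖ := by simp [abs_of_nonneg hc]
    _ ≤ ‖x‖ ^ 2 + ‖y‖ ^ 2 + c ^ 2 := by nlinarith [sq_nonneg (c - ‖y‖)]
    _ < 1 + c ^ 2 := by linarith

theorem stmt11 (a : ℝ) (ha0 : 0 ≤ a) (ha1 : a < 1) :
    (∀ z : EuclideanSpace ℂ (Fin 2), ‖z‖ < 1 →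
      ‖(z 0 ^ 2 + 2 * (Real.sqrt (1 - a ^ 2) : ℂ) * z 1) / ((2 - a ^ 2 : ℝ) : ℂ)‖ ≤ 1) ∧
    (0 < a → ∀ z : EuclideanSpace ℂ (Fin 2), ‖z‖ < 1 →
      ‖(z 0 ^ 2 + 2 * (Real.sqrt (1 - a ^ 2) : ℂ) * z 1) / ((2 - a ^ 2 : ℝ) : ℂ)‖ < 1) := by
  have hc : Real.sqrt (1 - a ^ 2) ^ 2 = 1 - a ^ 2 := Real.sq_sqrt (by nlinarith)
  have hden : 0 < 2 - a ^ 2 := by nlinarith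
  have key : ∀ z : EuclideanSpace ℂ (Fin 2), ‖z‖ < 1 →
      ‖(z 0 ^ 2 + 2 * (Real.sqrt (1 - a ^ 2) : ℂ) * z 1) / ((2 - a ^ 2 : ℝ) : ℂ)‖ < 1 := by
    intro z hz
    have hsum : ‖z 0‖ ^ 2 + ‖z 1‖ ^ 2 < 1 := by
      rw [← EuclideanSpace.norm_sq_fin_two]
      exact pow_lt_one₀ (norm_nonneg z) hz two_ne_zero
    rw [norm_div, Complex.norm_real, Real.norm_of_nonneg hden.le, div_lt_one hden]
    have hnum := norm_sq_add_two_mul_lt (Real.sqrt_nonneg (1 - a ^ 2)) hsum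
    linarith
  exact ⟨fun z hz => (key z hz).le, fun _ z hz => key z hz⟩
end

section
/- Let T = (T₁, T₂) be a pair of commuting 3×3 matrices of block form T_i = [[A_i, β_i],[0,0]] satisfying T₁T₁* + T₂T₂* ≤ I, and suppose ‖F_α(A₁,A₂)‖ ≤ 1 (which holds by the 2×2 von Neumann inequality). Then for every α ∈ [0,1), ‖F_α(T₁, T₂)‖ ≤ 2/√3, where F_α(z,w) = (z² + 2√(1−α²)w)/(2−α²). -/
/-!
Pass to adjoints: `F_α(T)* = (T₁*² + 2√(1-α²) T₂*) / (2 - α²)`, and the row contraction condition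
reads `‖T₁* ξ‖² + ‖T₂* ξ‖² ≤ ‖ξ‖²`. In particular `T₁*` is a contraction, so
`‖F_α(T)* ξ‖ ≤ (u + 2√(1-α²) v) / (2 - α²) · ‖ξ‖` with `u² + v² ≤ 1`, and by Cauchy–Schwarz the
right-hand side is at most `√(5 - 4α²) / (2 - α²) · ‖ξ‖ ≤ 2/√3 · ‖ξ‖`.
-/

open Matrix ComplexOrder

theorem inv_mul_add_two_sqrt_mul_le {α a b r : ℝ} (hα : α ^ 2 ≤ 1) (hr : 0 ≤ r)
    (hab : a ^ 2 + b ^ 2 ≤ r ^ 2) :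
    (2 - α ^ 2)⁻¹ * (a + 2 * √(1 - α ^ 2) * b) ≤ 2 / √3 * r := by
  set c := 2 * √(1 - α ^ 2)
  have hc : c ^ 2 = 4 * (1 - α ^ 2) := by
    rw [mul_pow, Real.sq_sqrt (by linarith)]; norm_num
  have cauchy_schwarz : (a + c * b) ^ 2 ≤ (1 + c ^ 2) * (a ^ 2 + b ^ 2) := by
    nlinarith [sq_nonneg (c * a - b)]
  -- `(5 - 4 t) / (2 - t) ^ 2` is maximal, equal to `4 / 3`, at `t = α ^ 2 = 1 / 2`
  have optimum : 3 * (1 + c ^ 2) ≤ (2 * (2 - α ^ 2)) ^ 2 := by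
    rw [hc]; nlinarith [sq_nonneg (1 - 2 * α ^ 2)]
  have hsq : (√3 * (a + c * b)) ^ 2 ≤ (2 * (2 - α ^ 2) * r) ^ 2 := by
    rw [mul_pow, Real.sq_sqrt zero_le_three, mul_pow _ r]
    nlinarith [mul_le_mul_of_nonneg_left hab (by positivity : (0 : ℝ) ≤ 1 + c ^ 2)]
  have hpos : 0 < 2 - α ^ 2 := by linarith
  have hbound := (abs_le_of_sq_le_sq' hsq (by positivity)).2
  rw [inv_mul_le_iff₀ hpos, div_mul_eq_mul_div, ← mul_div_assoc, le_div_iff₀ (by positivity)]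
  linarith

namespace ContinuousLinearMap

theorem opNorm_inv_smul_sq_add_smul_le {𝕜 E : Type*} [RCLike 𝕜] [NormedAddCommGroup E]
    [NormedSpace 𝕜 E] {X Y : E →L[𝕜] E} (h : ∀ x, ‖X x‖ ^ 2 + ‖Y x‖ ^ 2 ≤ ‖x‖ ^ 2)
    {α : ℝ} (hα : α ^ 2 ≤ 1) :
    ‖((2 - α ^ 2 : ℝ) : 𝕜)⁻¹ • (X ^ 2 + ((2 * √(1 - α ^ 2) : ℝ) : 𝕜) • Y)‖ ≤ 2 / √3 := by
  refine opNorm_le_bound _ (by positivity) fun x ↦ ?_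
  have hX : ‖X (X x)‖ ≤ ‖X x‖ :=
    abs_le_of_sq_le_sq' (by nlinarith [h (X x), sq_nonneg ‖Y (X x)‖]) (norm_nonneg _) |>.2
  calc ‖(((2 - α ^ 2 : ℝ) : 𝕜)⁻¹ • (X ^ 2 + ((2 * √(1 - α ^ 2) : ℝ) : 𝕜) • Y)) x‖
      = (2 - α ^ 2)⁻¹ * ‖X (X x) + ((2 * √(1 - α ^ 2) : ℝ) : 𝕜) • Y x‖ := by
        rw [_root_.smul_apply, norm_smul, norm_inv, RCLike.norm_ofReal, abs_of_pos (by linarith)]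
        rfl
    _ ≤ (2 - α ^ 2)⁻¹ * (‖X x‖ + 2 * √(1 - α ^ 2) * ‖Y x‖) := by
        gcongr ?_ * ?_
        · exact inv_nonneg.2 (by linarith)
        refine (norm_add_le _ _).trans (add_le_add hX (le_of_eq ?_))
        rw [norm_smul, RCLike.norm_ofReal, abs_of_nonneg (by positivity)]
    _ ≤ 2 / √3 * ‖x‖ := inv_mul_add_two_sqrt_mul_le hα (norm_nonneg x) (h x)

theorem IsPositive.norm_sq_add_norm_sq_le {𝕜 E : Type*} [RCLike 𝕜] [NormedAddCommGroup E]
    [InnerProductSpace 𝕜 E] [CompleteSpace E] {X Y : E →L[𝕜] E}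
    (h : (1 - (star X * X + star Y * Y)).IsPositive) (x : E) :
    ‖X x‖ ^ 2 + ‖Y x‖ ^ 2 ≤ ‖x‖ ^ 2 := by
  have := h.re_inner_nonneg_right x
  rw [apply_norm_sq_eq_inner_adjoint_right X, apply_norm_sq_eq_inner_adjoint_right Y,
    ← inner_self_eq_norm_sq (𝕜 := 𝕜)]
  simpa [star_eq_adjoint, inner_sub_right, inner_add_right] using this

end ContinuousLinearMap

namespace Matrix

theorem PosSemidef.norm_sq_add_norm_sq_le {𝕜 n : Type*} [RCLike 𝕜] [Fintype n] [DecidableEq n]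
    {S R : Matrix n n 𝕜} (h : (1 - (S * Sᴴ + R * Rᴴ)).PosSemidef) (x : EuclideanSpace 𝕜 n) :
    ‖toEuclideanCLM (𝕜 := 𝕜) Sᴴ x‖ ^ 2 + ‖toEuclideanCLM (𝕜 := 𝕜) Rᴴ x‖ ^ 2 ≤ ‖x‖ ^ 2 := by
  refine ContinuousLinearMap.IsPositive.norm_sq_add_norm_sq_le ?_ x
  simp only [← map_star, star_eq_conjTranspose, conjTranspose_conjTranspose, ← map_mul, ← map_add,
    ← map_one (toEuclideanCLM (𝕜 := 𝕜) (n := n)), ← map_sub]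
  exact isPositive_toEuclideanLin_iff.mpr h

theorem norm_toEuclideanCLM_conjTranspose {𝕜 n : Type*} [RCLike 𝕜] [Fintype n] [DecidableEq n]
    (M : Matrix n n 𝕜) : ‖toEuclideanCLM (𝕜 := 𝕜) Mᴴ‖ = ‖toEuclideanCLM (𝕜 := 𝕜) M‖ := by
  rw [← star_eq_conjTranspose, map_star]
  exact norm_star (toEuclideanCLM (𝕜 := 𝕜) M)

end Matrix

theorem stmt14_general
    (T : Fin 2 → Matrix (Fin 3) (Fin 3) ℂ)
    (hrc : (1 - (T 0 * (T 0)ᴴ + T 1 * (T 1)ᴴ)).PosSemidef)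
    (α : ℝ) (hα0 : 0 ≤ α) (hα1 : α < 1) :
    ‖Matrix.toEuclideanCLM (𝕜 := ℂ)
      (((((2 - α ^ 2 : ℝ) : ℂ))⁻¹ • (T 0 ^ 2 + ((2 * Real.sqrt (1 - α ^ 2) : ℝ) : ℂ) • T 1) :
        Matrix (Fin 3) (Fin 3) ℂ))‖ ≤ 2 / Real.sqrt 3 := by
  have hα : α ^ 2 ≤ 1 := by nlinarith
  have adjoint_eq : ((((2 - α ^ 2 : ℝ) : ℂ))⁻¹
        • (T 0 ^ 2 + ((2 * Real.sqrt (1 - α ^ 2) : ℝ) : ℂ) • T 1))ᴴ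
      = (((2 - α ^ 2 : ℝ) : ℂ))⁻¹
        • ((T 0)ᴴ ^ 2 + ((2 * Real.sqrt (1 - α ^ 2) : ℝ) : ℂ) • (T 1)ᴴ) := by
    simp [conjTranspose_pow]
  rw [← norm_toEuclideanCLM_conjTranspose, adjoint_eq, map_smul, map_add, map_smul, map_pow]
  exact ContinuousLinearMap.opNorm_inv_smul_sq_add_smul_le hrc.norm_sq_add_norm_sq_le hα

theorem stmt14 (A : Fin 2 → Matrix (Fin 2) (Fin 2) ℂ) (β : Fin 2 → Fin 2 → ℂ)
    (T : Fin 2 → Matrix (Fin 3) (Fin 3) ℂ)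
    (hT : ∀ i, T i = !![A i 0 0, A i 0 1, β i 0;
                       A i 1 0, A i 1 1, β i 1;
                       0, 0, 0])
    (hcomm : T 0 * T 1 = T 1 * T 0)
    (hrc : (1 - (T 0 * (T 0)ᴴ + T 1 * (T 1)ᴴ)).PosSemidef)
    (α : ℝ) (hα0 : 0 ≤ α) (hα1 : α < 1)
    (h2x2 : ‖Matrix.toEuclideanCLM (𝕜 := ℂ)
      (((((2 - α ^ 2 : ℝ) : ℂ))⁻¹ • (A 0 ^ 2 + ((2 * Real.sqrt (1 - α ^ 2) : ℝ) : ℂ) • A 1) :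
        Matrix (Fin 2) (Fin 2) ℂ))‖ ≤ 1) :
    ‖Matrix.toEuclideanCLM (𝕜 := ℂ)
      (((((2 - α ^ 2 : ℝ) : ℂ))⁻¹ • (T 0 ^ 2 + ((2 * Real.sqrt (1 - α ^ 2) : ℝ) : ℂ) • T 1) :
        Matrix (Fin 3) (Fin 3) ℂ))‖ ≤ 2 / Real.sqrt 3 :=
  stmt14_general T hrc α hα0 hα1
end
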